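/- Let a = s_{i_1}⋯s_{i_r} be a reduced word for w ∈ S_n, let s = s_{i_r}, and let a/s be the word s_{i_1}⋯s_{i_{r-1}} (a reduced word for ws). Define P_x(a) = Σ_{σ : π(w^σ)=x} q^{|D(σ)|}, the generating polynomial of the defect statistic over masks whose product is x. Then for all x ∈ S_n: P_x(a) = q^{c_s(x)} P_x(a/s) + q^{1−c_s(x)} P_{xs}(a/s), where c_s(x) = 1 if ℓ(xs) < ℓ(x) and c_s(x) = 0 otherwise. -/

import Mathlib

open Polynomial

/-- The simple transposition `s_i = (i, i+1)` (1-based) in `S_n`, acting on `Fin n`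
(0-based positions `i-1` and `i`); equals `1` if `i` is out of range. -/
def gen (n : ℕ) (i : ℕ) : Equiv.Perm (Fin n) :=
  if h : 1 ≤ i ∧ i < n then Equiv.swap ⟨i - 1, by omega⟩ ⟨i, h.2⟩ else 1

/-- Product of the word `l` of generator indices. -/
def wordProd (n : ℕ) (l : List ℕ) : Equiv.Perm (Fin n) :=
  (l.map (gen n)).prod

/-- Coxeter length of `w ∈ S_n`. -/
noncomputable def len (n : ℕ) (w : Equiv.Perm (Fin n)) : ℕ :=
  sInf {r | ∃ l : List ℕ, (∀ i ∈ l, 1 ≤ i ∧ i < n) ∧ wordProd n l = w ∧ l.length = r}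

/-- `l` is a reduced word for `w`. -/
def IsReducedWord (n : ℕ) (w : Equiv.Perm (Fin n)) (l : List ℕ) : Prop :=
  (∀ i ∈ l, 1 ≤ i ∧ i < n) ∧ wordProd n l = w ∧ l.length = len n w

/-- Bruhat-Chevalley order: `x ≤ w` iff every reduced word for `w` contains a
subword whose product is `x`. -/
def Bruhat (n : ℕ) (x w : Equiv.Perm (Fin n)) : Prop :=
  ∀ l, IsReducedWord n w l → ∃ t, t.Sublist l ∧ wordProd n t = x

/-- `w` is 321-avoiding: no `i < j < k` with `w i > w j > w k`. -/
def Avoids321 (n : ℕ) (w : Equiv.Perm (Fin n)) : Prop :=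
  ¬ ∃ i j k : Fin n, i < j ∧ j < k ∧ w j < w i ∧ w k < w j

/-- Product of the subword of `l` selected by the mask `S` (set of selected positions). -/
def maskProd (n : ℕ) (l : List ℕ) (S : Finset ℕ) : Equiv.Perm (Fin n) :=
  wordProd n (((List.range l.length).filter (fun j => decide (j ∈ S))).map (fun j => l.getD j 0))

/-- Position `j` of the word `l` is a defect of the mask `S`. -/
noncomputable def IsDefect (n : ℕ) (l : List ℕ) (S : Finset ℕ) (j : ℕ) : Prop :=
  len n (maskProd n (l.take j) S * gen n (l.getD j 0)) < len n (maskProd n (l.take j) S)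

/-- The defect set `D(σ)` of the mask `S` on the word `l`. -/
noncomputable def defectSet (n : ℕ) (l : List ℕ) (S : Finset ℕ) : Finset ℕ :=
  (Finset.range l.length).filter (fun j =>
    len n (maskProd n (l.take j) S * gen n (l.getD j 0)) < len n (maskProd n (l.take j) S))

/-- Deodhar's defect generating polynomial `P_x(a) = Σ_{σ : π(w^σ) = x} q^{|D(σ)|}`. -/
noncomputable def defPoly (n : ℕ) (l : List ℕ) (x : Equiv.Perm (Fin n)) : Polynomial ℤ :=
  ∑ S ∈ (Finset.range l.length).powerset,
    if maskProd n l S = x then (X : Polynomial ℤ) ^ (defectSet n l S).card else 0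

/-!
Split the masks of `m ++ [s]` according to whether they select the last letter. On the first
`|m|` positions a mask has the same partial products, hence the same defects, as its restriction
to `m`; the last position is a defect exactly when appending `s` lowers the length of the
product over `m`. If the last letter is not selected, that product is `x`, so the extra defect
occurs iff `xs < x`. If it is selected, the product over `m` is `xs`, and because right
multiplication by `s` always changes the length (it flips the sign), the extra defect occurs
iff `xs > x`.
-/

lemma gen_mul_self (n i : ℕ) : gen n i * gen n i = 1 := by
  unfold gen
  split_ifs
  · exact Equiv.swap_mul_self _ _
  · exact one_mul 1

lemma sign_gen {n i : ℕ} (hi : 1 ≤ i ∧ i < n) : Equiv.Perm.sign (gen n i) = -1 := by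
  rw [gen, dif_pos hi, Equiv.Perm.sign_swap]
  simp only [ne_eq, Fin.mk.injEq]
  omega

lemma wordProd_append (n : ℕ) (a b : List ℕ) :
    wordProd n (a ++ b) = wordProd n a * wordProd n b := by
  rw [wordProd, List.map_append, List.prod_append, wordProd, wordProd]

lemma sign_wordProd {n : ℕ} {l : List ℕ} (hl : ∀ i ∈ l, 1 ≤ i ∧ i < n) :
    Equiv.Perm.sign (wordProd n l) = (-1) ^ l.length := by
  induction l with
  | nil => simp [wordProd]
  | cons i l ih =>
    have hrest := ih fun j hj => hl j (List.mem_cons_of_mem _ hj)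
    rw [← List.singleton_append, wordProd_append, map_mul, hrest, wordProd, List.map_singleton,
      List.prod_singleton, sign_gen (hl i List.mem_cons_self), List.length_append,
      List.length_singleton, pow_add, pow_one]

lemma exists_word (n : ℕ) (w : Equiv.Perm (Fin n)) :
    ∃ l : List ℕ, (∀ i ∈ l, 1 ≤ i ∧ i < n) ∧ wordProd n l = w := by
  cases n with
  | zero => exact ⟨[], by simp, Subsingleton.elim _ _⟩
  | succ m =>
    have hw : w ∈ Submonoid.closure
        (Set.range fun i : Fin m => Equiv.swap i.castSucc i.succ) := by
      rw [Equiv.Perm.mclosure_swap_castSucc_succ]; trivial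
    induction hw using Submonoid.closure_induction with
    | mem _ hg =>
      obtain ⟨i, rfl⟩ := hg
      refine ⟨[i + 1], by simp, ?_⟩
      rw [wordProd, List.map_singleton, List.prod_singleton, gen, dif_pos (by omega)]
      rfl
    | one => exact ⟨[], by simp, rfl⟩
    | mul _ _ _ _ ha hb =>
      obtain ⟨a, ha, rfl⟩ := ha
      obtain ⟨b, hb, rfl⟩ := hb
      refine ⟨a ++ b, fun i hi => ?_, wordProd_append _ a b⟩
      rcases List.mem_append.mp hi with hi | hi
      exacts [ha i hi, hb i hi]

lemma exists_isReducedWord (n : ℕ) (w : Equiv.Perm (Fin n)) : ∃ l, IsReducedWord n w l := by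
  obtain ⟨l, hl, hw⟩ := exists_word n w
  have hne : {r | ∃ l : List ℕ, (∀ i ∈ l, 1 ≤ i ∧ i < n) ∧ wordProd n l = w ∧
      l.length = r}.Nonempty := ⟨l.length, l, hl, hw, rfl⟩
  exact Nat.sInf_mem hne

lemma sign_eq_neg_one_pow_len (n : ℕ) (w : Equiv.Perm (Fin n)) :
    Equiv.Perm.sign w = (-1) ^ len n w := by
  obtain ⟨l, hl, rfl, hlen⟩ := exists_isReducedWord n w
  rw [← hlen, sign_wordProd hl]

lemma len_mul_gen_ne {n i : ℕ} (hi : 1 ≤ i ∧ i < n) (x : Equiv.Perm (Fin n)) :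
    len n (x * gen n i) ≠ len n x := by
  intro h
  have hsign := sign_eq_neg_one_pow_len n (x * gen n i)
  rw [map_mul, sign_gen hi, sign_eq_neg_one_pow_len n x, h, mul_eq_left] at hsign
  exact absurd hsign (by decide)

lemma len_mul_gen_lt_iff_of_mul_eq {n i : ℕ} (hi : 1 ≤ i ∧ i < n) {x y : Equiv.Perm (Fin n)}
    (hxy : y * gen n i = x) :
    len n (y * gen n i) < len n y ↔ ¬ len n (x * gen n i) < len n x := by
  have hy : x * gen n i = y := by rw [← hxy, mul_assoc, gen_mul_self, mul_one]
  rw [hy, ← hxy]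
  have := len_mul_gen_ne hi y
  omega

lemma maskProd_insert_of_length_le (n : ℕ) (l : List ℕ) (S : Finset ℕ) {j : ℕ}
    (hj : l.length ≤ j) : maskProd n l (insert j S) = maskProd n l S := by
  unfold maskProd
  congr 2
  refine List.filter_congr fun k hk => ?_
  have : k ≠ j := by rw [List.mem_range] at hk; omega
  simp [this]

lemma defectSet_insert_of_length_le (n : ℕ) (l : List ℕ) (S : Finset ℕ) {j : ℕ}
    (hj : l.length ≤ j) : defectSet n l (insert j S) = defectSet n l S := by
  unfold defectSet
  refine Finset.filter_congr fun k _ => ?_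
  rw [maskProd_insert_of_length_le n (l.take k) S ((List.length_take_le' k l).trans hj)]

lemma maskProd_concat (n : ℕ) (m : List ℕ) (s : ℕ) (S : Finset ℕ) :
    maskProd n (m ++ [s]) S = maskProd n m S * if m.length ∈ S then gen n s else 1 := by
  unfold maskProd
  rw [List.length_append, List.length_singleton, List.range_succ, List.filter_append,
    List.map_append, wordProd_append]
  congr 1
  · congr 1
    refine List.map_congr_left fun j hj => ?_
    have hj : j < m.length := List.mem_range.mp (List.mem_of_mem_filter hj)
    simp [List.getD_eq_getElem?_getD, List.getElem?_append_left hj]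
  · by_cases h : m.length ∈ S <;> simp [h, wordProd]

lemma card_defectSet_concat (n : ℕ) (m : List ℕ) (s : ℕ) (S : Finset ℕ) :
    (defectSet n (m ++ [s]) S).card = (defectSet n m S).card +
      if len n (maskProd n m S * gen n s) < len n (maskProd n m S) then 1 else 0 := by
  have hprefix : ∀ j ≤ m.length, (m ++ [s]).take j = m.take j := fun j hj =>
    List.take_append_of_le_length hj
  have hrest : (Finset.range m.length).filter (fun j =>
      len n (maskProd n ((m ++ [s]).take j) S * gen n ((m ++ [s]).getD j 0)) <
        len n (maskProd n ((m ++ [s]).take j) S)) = defectSet n m S := by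
    refine Finset.filter_congr fun j hj => ?_
    have hj : j < m.length := Finset.mem_range.mp hj
    rw [hprefix j hj.le, List.getD_eq_getElem?_getD, List.getElem?_append_left hj,
      ← List.getD_eq_getElem?_getD]
  have hlast : (m ++ [s]).getD m.length 0 = s := by simp [List.getD_eq_getElem?_getD]
  rw [defectSet, List.length_append, List.length_singleton, Finset.range_add_one,
    Finset.filter_insert, hprefix m.length le_rfl, List.take_length, hlast]
  split_ifs
  · rw [Finset.card_insert_of_notMem (by simp), hrest]
  · rw [hrest, add_zero]

theorem defPoly_concat {n s : ℕ} (hs : 1 ≤ s ∧ s < n) (m : List ℕ)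
    (x : Equiv.Perm (Fin n)) :
    defPoly n (m ++ [s]) x =
      X ^ (if len n (x * gen n s) < len n x then 1 else 0) * defPoly n m x +
      X ^ (1 - if len n (x * gen n s) < len n x then 1 else 0) * defPoly n m (x * gen n s) := by
  unfold defPoly
  rw [List.length_append, List.length_singleton, Finset.range_add_one,
    Finset.sum_powerset_insert Finset.notMem_range_self, Finset.mul_sum, Finset.mul_sum]
  congr 1 <;> refine Finset.sum_congr rfl fun T hT => ?_
  · have hlast : m.length ∉ T := fun h => by simpa using Finset.mem_powerset.mp hT h
    rw [maskProd_concat, if_neg hlast, mul_one, card_defectSet_concat]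
    by_cases hx : maskProd n m T = x
    · rw [if_pos hx, if_pos hx, hx, pow_add, mul_comm]
    · rw [if_neg hx, if_neg hx, mul_zero]
  · rw [maskProd_concat, if_pos (Finset.mem_insert_self _ _),
      maskProd_insert_of_length_le n m T le_rfl, card_defectSet_concat,
      maskProd_insert_of_length_le n m T le_rfl, defectSet_insert_of_length_le n m T le_rfl]
    have hiff : maskProd n m T * gen n s = x ↔ maskProd n m T = x * gen n s := by
      constructor
      · rintro rfl
        rw [mul_assoc, gen_mul_self, mul_one]
      · intro h
        rw [h, mul_assoc, gen_mul_self, mul_one]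
    by_cases hx : maskProd n m T * gen n s = x
    · rw [if_pos hx, if_pos (hiff.mp hx), pow_add, mul_comm]
      simp only [len_mul_gen_lt_iff_of_mul_eq hs hx]
      split_ifs <;> rfl
    · rw [if_neg hx, if_neg (mt hiff.mpr hx), mul_zero]

/-- recursion `P_x(a) = q^{c_s(x)} P_x(a/s) + q^{1-c_s(x)} P_{xs}(a/s)`
where `s` is the last letter of the reduced word `a` and `c_s(x) = 1` iff `xs < x`. -/
theorem stmt6 (n : ℕ) (w : Equiv.Perm (Fin n)) (l : List ℕ) (hl : IsReducedWord n w l)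
    (hne : l ≠ []) (x : Equiv.Perm (Fin n)) :
    defPoly n l x =
      (X : Polynomial ℤ) ^ (if len n (x * gen n (l.getD (l.length - 1) 0)) < len n x
          then 1 else 0)
        * defPoly n l.dropLast x +
      (X : Polynomial ℤ) ^ (1 - (if len n (x * gen n (l.getD (l.length - 1) 0)) < len n x
          then 1 else 0))
        * defPoly n l.dropLast (x * gen n (l.getD (l.length - 1) 0)) := by
  obtain ⟨m, s, rfl⟩ : ∃ m s, l = m ++ [s] :=
    ⟨_, _, (List.dropLast_append_getLast hne).symm⟩
  have hs : 1 ≤ s ∧ s < n := hl.1 s (by simp)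
  have hlast : (m ++ [s]).getD ((m ++ [s]).length - 1) 0 = s := by
    simp [List.getD_eq_getElem?_getD]
  rw [hlast, List.dropLast_concat]
  exact defPoly_concat hs m x
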